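/- Let Ψ ∈ ℂ^{N×n} have DFT-incoherence parameter γ and set A = (√N/√m) S Ψ ∈ ℂ^{m×n}. Then for every choice of sample points t̃_1,…,t̃_m ∈ ℝ and every k ∈ {1,…,m} and ℓ ∈ {1,…,n}, the entries of A satisfy |A_{kℓ}| ≤ γ/√m. -/

import Mathlib

open scoped BigOperators
open MeasureTheory Matrix

noncomputable section

/-- The complex exponential `e(x) = exp(2πix)`. -/
def ce (x : ℝ) : ℂ := Complex.exp (2 * Real.pi * Complex.I * x)

/-- Half-bandwidth `Ñ = (N-1)/2`. -/
def Nt (N : ℕ) : ℤ := ((N : ℤ) - 1) / 2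

/-- Uniform grid point `t_p = (p-1)/N - 1/2` (zero-based index). -/
def tg (N : ℕ) (p : Fin N) : ℝ := (p : ℝ) / N - 1 / 2

/-- Dirichlet interpolation matrix `S ∈ ℂ^{m×N}`. -/
def dirS (N m : ℕ) (tt : Fin m → ℝ) : Matrix (Fin m) (Fin N) ℂ :=
  fun k p => (N : ℂ)⁻¹ * ∑ u ∈ Finset.Icc (-(Nt N)) (Nt N), ce (u * (tg N p - tt k))

/-- Centered DFT matrix `F ∈ ℂ^{N×N}`. -/
def dftF (N : ℕ) : Matrix (Fin N) (Fin N) ℂ :=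
  fun p u => ((Real.sqrt N : ℂ))⁻¹ * ce (-(tg N p) * ((u : ℤ) - Nt N))

/-- DFT-incoherence parameter of `Ψ`. -/
def dftIncoh (N n : ℕ) (Ψ : Matrix (Fin N) (Fin n) ℂ) : ℝ :=
  ⨆ ℓ : Fin n, ∑ k : Fin N, ‖((dftF N)ᴴ * Ψ) k ℓ‖

/-- Euclidean norm on `ℂ^n`. -/
def norm2 {n : ℕ} (v : Fin n → ℂ) : ℝ := Real.sqrt (∑ i, ‖v i‖ ^ 2)

/-- `ℓ₁` norm on `ℂ^n`. -/
def norm1 {n : ℕ} (v : Fin n → ℂ) : ℝ := ∑ i, ‖v i‖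

/-- `v` has at most `s` nonzero entries. -/
def Sparse {n : ℕ} (s : ℕ) (v : Fin n → ℂ) : Prop :=
  (Finset.univ.filter fun i => v i ≠ 0).card ≤ s

/-- Error of the best `s`-sparse approximation of `g` in `ℓ₁`. -/
def sperr {n : ℕ} (s : ℕ) (g : Fin n → ℂ) : ℝ :=
  sInf {r : ℝ | ∃ h : Fin n → ℂ, Sparse s h ∧ r = norm1 (fun i => h i - g i)}

/-- The 1-periodic signal with Fourier coefficients `c`. -/
def fcont (c : ℤ → ℂ) (x : ℝ) : ℂ := ∑' ℓ : ℤ, c ℓ * ce (ℓ * x)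

/-- Tail `∑_{|ℓ|>Ñ} |c_ℓ|` of the Fourier coefficients. -/
def tailSum (N : ℕ) (c : ℤ → ℂ) : ℝ :=
  ∑' ℓ : ℤ, if Nt N < |ℓ| then ‖c ℓ‖ else 0

/-- The distribution `𝒟` satisfies the deviation model with parameter `θ`. -/
def DevModel (N m : ℕ) (𝒟 : Measure ℝ) (θ : ℝ) : Prop :=
  ∀ j : ℤ, j ≠ 0 → (|j| : ℝ) ≤ 2 * ((N : ℝ) - 1) / m →
    (2 * N / m) * ‖∫ x, ce (((j * m : ℤ) : ℝ) * x) ∂𝒟‖ ≤ θ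

/-- The random nonuniform sample points `t̃_k = (k-1)/m - 1/2 + Δ_k`. -/
def samplePts {Ω : Type*} (m : ℕ) (Δ : Fin m → Ω → ℝ) (ω : Ω) : Fin m → ℝ :=
  fun k => (k : ℝ) / m - 1 / 2 + Δ k ω

end

/-!
Expanding the Dirichlet kernel, `(S Ψ)ₖₗ = N⁻¹ ∑_{|u| ≤ Ñ} e(-u t̃ₖ) X(u)` with
`X(u) = ∑ₚ e(u tₚ) Ψₚₗ`, and the same trigonometric sums `X(u)`, divided by `√N`, are the
entries of the `ℓ`-th column of `Fᴴ Ψ`, which lists them at the `N` frequencies `v - Ñ`,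
among which are all `|u| ≤ Ñ` since `2Ñ < N`. The triangle inequality then bounds
`√N |(S Ψ)ₖₗ|` by the `ℓ₁` norm of that column, hence by `γ`; the sample points only enter
through the unimodular factors `e(-u t̃ₖ)`.
-/

lemma ce_add (x y : ℝ) : ce (x + y) = ce x * ce y := by
  rw [ce, ce, ce, ← Complex.exp_add]
  push_cast
  ring_nf

lemma norm_ce (x : ℝ) : ‖ce x‖ = 1 := by
  rw [ce, Complex.norm_exp]
  simp

lemma star_ce (x : ℝ) : star (ce x) = ce (-x) := by
  rw [ce, ce, Complex.star_def, ← Complex.exp_conj]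
  simp only [map_mul, Complex.conj_ofReal, Complex.conj_I, Complex.conj_ofNat]
  push_cast
  ring_nf

lemma sum_Icc_le_sum_fin_sub {f : ℤ → ℝ} (hf : ∀ u, 0 ≤ f u) {b c : ℤ} {N : ℕ}
    (hb : b + c < N) : ∑ u ∈ Finset.Icc (-c) b, f u ≤ ∑ v : Fin N, f (v - c) := by
  have hinj : Set.InjOn (fun v : Fin N => (v : ℤ) - c) (Finset.univ : Finset (Fin N)) :=
    fun v _ w _ h => Fin.ext (by simpa using h)
  rw [← Finset.sum_image hinj]
  refine Finset.sum_le_sum_of_subset_of_nonneg (fun u hu => ?_) fun u _ _ => hf u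
  rw [Finset.mem_Icc] at hu
  exact Finset.mem_image.2 ⟨⟨(u + c).toNat, by omega⟩, Finset.mem_univ _, by simp; omega⟩

lemma sum_Icc_Nt_le_sum_fin {f : ℤ → ℝ} (hf : ∀ u, 0 ≤ f u) (N : ℕ) :
    ∑ u ∈ Finset.Icc (-Nt N) (Nt N), f u ≤ ∑ v : Fin N, f (v - Nt N) :=
  sum_Icc_le_sum_fin_sub hf (by unfold Nt; omega)

noncomputable def gridTrigSum (N : ℕ) (x : Fin N → ℂ) (u : ℤ) : ℂ := ∑ p, ce (u * tg N p) * x p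

lemma dirS_mul_apply (N m : ℕ) (tt : Fin m → ℝ) {n : ℕ} (Ψ : Matrix (Fin N) (Fin n) ℂ)
    (k : Fin m) (ℓ : Fin n) :
    (dirS N m tt * Ψ) k ℓ = (N : ℂ)⁻¹ * ∑ u ∈ Finset.Icc (-Nt N) (Nt N),
      ce (-(u * tt k)) * gridTrigSum N (fun p => Ψ p ℓ) u := by
  simp only [Matrix.mul_apply, dirS, gridTrigSum, Finset.mul_sum, Finset.sum_mul]
  rw [Finset.sum_comm]
  refine Finset.sum_congr rfl fun u _ => Finset.sum_congr rfl fun p _ => ?_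
  rw [show (u : ℝ) * (tg N p - tt k) = -(u * tt k) + u * tg N p by ring, ce_add]
  ring

lemma dftF_conjTranspose_mul_apply (N : ℕ) {n : ℕ} (Ψ : Matrix (Fin N) (Fin n) ℂ) (v : Fin N)
    (ℓ : Fin n) :
    ((dftF N)ᴴ * Ψ) v ℓ = (Real.sqrt N : ℂ)⁻¹ * gridTrigSum N (fun p => Ψ p ℓ) (v - Nt N) := by
  have hstar : star (Real.sqrt N : ℂ) = Real.sqrt N := Complex.conj_ofReal _
  simp only [Matrix.mul_apply, Matrix.conjTranspose_apply, dftF, gridTrigSum, Finset.mul_sum,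
    star_mul', star_inv₀, hstar, star_ce]
  refine Finset.sum_congr rfl fun p _ => ?_
  push_cast
  ring_nf

lemma sqrt_mul_norm_dirS_mul_apply_le (N m : ℕ) (tt : Fin m → ℝ)
    {n : ℕ} (Ψ : Matrix (Fin N) (Fin n) ℂ) (k : Fin m) (ℓ : Fin n) :
    Real.sqrt N * ‖(dirS N m tt * Ψ) k ℓ‖ ≤ ∑ v : Fin N, ‖((dftF N)ᴴ * Ψ) v ℓ‖ := by
  set X := gridTrigSum N fun p => Ψ p ℓ
  have hS : ‖(dirS N m tt * Ψ) k ℓ‖ ≤ (N : ℝ)⁻¹ * ∑ u ∈ Finset.Icc (-Nt N) (Nt N), ‖X u‖ := by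
    rw [dirS_mul_apply, norm_mul, norm_inv, Complex.norm_natCast]
    gcongr
    refine (norm_sum_le _ _).trans_eq (Finset.sum_congr rfl fun u _ => ?_)
    rw [norm_mul, norm_ce, one_mul]
  have hF (v : Fin N) : Real.sqrt N * (N : ℝ)⁻¹ * ‖X (v - Nt N)‖ = ‖((dftF N)ᴴ * Ψ) v ℓ‖ := by
    rw [dftF_conjTranspose_mul_apply, norm_mul, norm_inv, Complex.norm_real,
      Real.norm_of_nonneg (Real.sqrt_nonneg _), ← div_eq_mul_inv, Real.sqrt_div_self', one_div]
  calc Real.sqrt N * ‖(dirS N m tt * Ψ) k ℓ‖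
      ≤ Real.sqrt N * ((N : ℝ)⁻¹ * ∑ v : Fin N, ‖X (v - Nt N)‖) := by
        gcongr
        exact hS.trans (by gcongr; exact sum_Icc_Nt_le_sum_fin (fun _ => norm_nonneg _) N)
    _ = ∑ v : Fin N, ‖((dftF N)ᴴ * Ψ) v ℓ‖ := by
        rw [← mul_assoc, Finset.mul_sum]
        exact Finset.sum_congr rfl fun v _ => hF v

lemma sum_norm_dftF_conjTranspose_mul_le_dftIncoh (N : ℕ) {n : ℕ} (Ψ : Matrix (Fin N) (Fin n) ℂ)
    (ℓ : Fin n) : ∑ v : Fin N, ‖((dftF N)ᴴ * Ψ) v ℓ‖ ≤ dftIncoh N n Ψ :=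
  le_ciSup (f := fun ℓ => ∑ v : Fin N, ‖((dftF N)ᴴ * Ψ) v ℓ‖) (Set.finite_range _).bddAbove ℓ

theorem entry_bound_of_dftIncoh_general
    (N n m : ℕ)
    (Ψ : Matrix (Fin N) (Fin n) ℂ)
    (tt : Fin m → ℝ)
    (A : Matrix (Fin m) (Fin n) ℂ)
    (hA : A = ((Real.sqrt N : ℂ) / (Real.sqrt m : ℂ)) • (dirS N m tt * Ψ)) :
    ∀ (k : Fin m) (ℓ : Fin n),
      ‖A k ℓ‖ ≤ dftIncoh N n Ψ / Real.sqrt m := by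
  intro k ℓ
  calc ‖A k ℓ‖ = Real.sqrt N * ‖(dirS N m tt * Ψ) k ℓ‖ / Real.sqrt m := by
        rw [hA, Matrix.smul_apply, smul_eq_mul, norm_mul, norm_div, Complex.norm_real,
          Complex.norm_real, Real.norm_of_nonneg (Real.sqrt_nonneg _),
          Real.norm_of_nonneg (Real.sqrt_nonneg _), div_mul_eq_mul_div]
    _ ≤ dftIncoh N n Ψ / Real.sqrt m := by
        gcongr
        exact (sqrt_mul_norm_dirS_mul_apply_le N m tt Ψ k ℓ).trans
          (sum_norm_dftF_conjTranspose_mul_le_dftIncoh N Ψ ℓ)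

/-- the entries of `A = (√N/√m) S Ψ` are uniformly bounded by `γ/√m`,
where `γ` is the DFT-incoherence parameter of `Ψ`. -/
theorem entry_bound_of_dftIncoh
    (N n m : ℕ) (hN : Odd N) (hNpos : 0 < N) (hm : 0 < m) (hn : 0 < n)
    (Ψ : Matrix (Fin N) (Fin n) ℂ)
    (tt : Fin m → ℝ)
    (A : Matrix (Fin m) (Fin n) ℂ)
    (hA : A = ((Real.sqrt N : ℂ) / (Real.sqrt m : ℂ)) • (dirS N m tt * Ψ)) :
    ∀ (k : Fin m) (ℓ : Fin n),
      ‖A k ℓ‖ ≤ dftIncoh N n Ψ / Real.sqrt m :=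
  entry_bound_of_dftIncoh_general N n m Ψ tt A hA
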